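/- arXiv:0902.1608 — 4 statements merged into one kernel-verified Lean document; each statement's English description precedes it below -/
import Mathlib

section
/- If c is an edge-colouring of the complete graph K_n with no monochromatic K_m (m ≥ 3) and no rainbow K_4, and A, B are disjoint vertex sets each of size at most k, then the number of colours used only on edges between A and B is at most k^(3/2)·√m. -/
/-- No monochromatic complete subgraph on `m` vertices. -/
def NoMonoClique (n m : ℕ) (c : Sym2 (Fin n) → ℕ) : Prop :=
  ¬ ∃ S : Finset (Fin n), S.card = m ∧
      ∃ col, ∀ x ∈ S, ∀ y ∈ S, x ≠ y → c s(x, y) = col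

/-- No rainbow complete subgraph on 4 vertices: in every 4-set, some two
distinct edges share a colour. -/
def NoRainbowK4 (n : ℕ) (c : Sym2 (Fin n) → ℕ) : Prop :=
  ¬ ∃ S : Finset (Fin n), S.card = 4 ∧
      ∀ x ∈ S, ∀ y ∈ S, ∀ z ∈ S, ∀ w ∈ S,
        x ≠ y → z ≠ w → s(x, y) ≠ s(z, w) → c s(x, y) ≠ c s(z, w)

/-- `e` is an edge joining `A` to `B`. -/
def Crosses {n : ℕ} (A B : Finset (Fin n)) (e : Sym2 (Fin n)) : Prop :=
  ∃ a ∈ A, ∃ b ∈ B, e = s(a, b)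

open Classical in
/-- The set of colours used by `c`, but only on edges joining `A` to `B`. -/
noncomputable def crossOnlyColours (n : ℕ) (c : Sym2 (Fin n) → ℕ)
    (A B : Finset (Fin n)) : Finset ℕ :=
  ((Finset.univ.filter (fun e : Sym2 (Fin n) => ¬ e.IsDiag ∧ Crosses A B e)).image c) \
    ((Finset.univ.filter (fun e : Sym2 (Fin n) => ¬ e.IsDiag ∧ ¬ Crosses A B e)).image c)

/-!
Choose one edge `ab` with `a ∈ A`, `b ∈ B` of every colour used only across; these edges `E` carry
distinct colours, none of which appears on an edge inside `A` or inside `B`. If `E` contains a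
square `ab, ab', a'b, a'b'`, then the six edges of `{a, a', b, b'}` can only repeat a colour on the
diagonals, so the absence of a rainbow `K₄` forces `c(aa') = c(bb')`. Hence the common
`E`-neighbourhood in `A` of two distinct `b, b' ∈ B` is a clique of colour `c(bb')` and has fewer
than `m` vertices. Counting the paths `b - a - b'` with Cauchy–Schwarz then gives
`|E|² ≤ |A| (|E| + (m - 1) |B|²) ≤ m k³`.
-/

open Finset

theorem Set.InjOn.insert_image_of_notMem {α β γ : Type*} {f : α → β} {g : β → γ} {s : Set α}
    {t : Set γ} {b : β} (h : Set.InjOn (g ∘ f) s) (hmaps : Set.MapsTo (g ∘ f) s t) (hb : g b ∉ t) :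
    Set.InjOn g (insert b (f '' s)) := by
  have hb' : b ∉ f '' s := by
    rintro ⟨a, ha, rfl⟩
    exact hb (hmaps ha)
  rw [Set.injOn_insert hb']
  exact ⟨h.image_of_comp, by rintro ⟨_, ⟨a, ha, rfl⟩, hab⟩; exact hb (hab ▸ hmaps ha)⟩

namespace Finset

variable {α β : Type*} (r : α → β → Prop) [∀ a b, Decidable (r a b)]
  {s : Finset α} {t : Finset β}

theorem sum_sq_card_bipartiteAbove :
    ∑ a ∈ s, #(t.bipartiteAbove r a) ^ 2 =
      ∑ p ∈ t ×ˢ t, #(s.bipartiteBelow (fun a p => r a p.1 ∧ r a p.2) p) := by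
  rw [← sum_card_bipartiteAbove_eq_sum_card_bipartiteBelow]
  refine sum_congr rfl fun a _ => ?_
  have : (t ×ˢ t).bipartiteAbove (fun a p => r a p.1 ∧ r a p.2) a =
      t.bipartiteAbove r a ×ˢ t.bipartiteAbove r a := by
    ext p
    simp only [mem_bipartiteAbove, mem_product]
    tauto
  rw [this, card_product, sq]

theorem sq_sum_card_bipartiteAbove_le [DecidableEq β] {d : ℕ}
    (hcodeg : ∀ b ∈ t, ∀ b' ∈ t, b ≠ b' → #{a ∈ s | r a b ∧ r a b'} ≤ d) :
    (∑ a ∈ s, #(t.bipartiteAbove r a)) ^ 2 ≤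
      #s * (∑ a ∈ s, #(t.bipartiteAbove r a) + d * #t ^ 2) := by
  have hdiag : ∑ p ∈ t.diag, #(s.bipartiteBelow (fun a p => r a p.1 ∧ r a p.2) p) =
      ∑ a ∈ s, #(t.bipartiteAbove r a) := by
    simp only [diag, sum_map, sum_card_bipartiteAbove_eq_sum_card_bipartiteBelow, bipartiteBelow,
      Function.Embedding.coeFn_mk, Function.diag_apply, and_self]
  have hoff : ∑ p ∈ t.offDiag, #(s.bipartiteBelow (fun a p => r a p.1 ∧ r a p.2) p) ≤
      d * #t ^ 2 := by
    calc _ ≤ ∑ _p ∈ t.offDiag, d := sum_le_sum fun p hp => by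
            obtain ⟨hp₁, hp₂, hne⟩ := mem_offDiag.1 hp
            exact hcodeg _ hp₁ _ hp₂ hne
      _ ≤ d * #t ^ 2 := by
        rw [sum_const, smul_eq_mul, mul_comm, offDiag_card, sq]
        exact Nat.mul_le_mul_left _ (Nat.sub_le _ _)
  calc _ ≤ #s * ∑ a ∈ s, #(t.bipartiteAbove r a) ^ 2 := sq_sum_le_card_mul_sum_sq
    _ ≤ _ := by
      rw [sum_sq_card_bipartiteAbove, ← diag_union_offDiag, sum_union (disjoint_diag_offDiag t),
        hdiag]
      gcongr

theorem card_eq_sum_card_bipartiteAbove_mem [DecidableEq α] [DecidableEq β] {E : Finset (α × β)}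
    (hE : E ⊆ s ×ˢ t) : #E = ∑ a ∈ s, #(t.bipartiteAbove (fun a b => (a, b) ∈ E) a) := by
  calc #E = #{p ∈ s ×ˢ t | p ∈ E} := by rw [filter_mem_eq_inter, inter_eq_right.2 hE]
    _ = _ := by simp only [card_filter, sum_product, bipartiteAbove]

end Finset

theorem Nat.cast_le_rpow_three_halves_mul_sqrt {x m k : ℕ} (h : x ^ 2 ≤ m * k ^ 3) :
    (x : ℝ) ≤ (k : ℝ) ^ ((3 : ℝ) / 2) * √m :=
  calc (x : ℝ) ≤ √(m * k ^ 3) := Real.le_sqrt_of_sq_le (by exact_mod_cast h)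
    _ = (k : ℝ) ^ ((3 : ℝ) / 2) * √m := by
      rw [Real.sqrt_mul' _ (by positivity), mul_comm, Real.sqrt_eq_rpow, ← Real.rpow_natCast,
        ← Real.rpow_mul k.cast_nonneg]
      norm_num

section Colourings

variable {n : ℕ} {c : Sym2 (Fin n) → ℕ}

theorem NoRainbowK4.not_injOn (hrain : NoRainbowK4 n c) {S : Finset (Fin n)} (hS : #S = 4) :
    ¬ Set.InjOn c {e | e ∈ S.sym2 ∧ ¬ e.IsDiag} := fun hinj =>
  hrain ⟨S, hS, fun _x hx _y hy _z hz _w hw hxy hzw hne hcol =>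
    hne (hinj ⟨mk_mem_sym2_iff.2 ⟨hx, hy⟩, by simpa⟩ ⟨mk_mem_sym2_iff.2 ⟨hz, hw⟩, by simpa⟩ hcol)⟩

theorem NoRainbowK4.apply_diagonals_eq (hrain : NoRainbowK4 n c) {a a' b b' : Fin n}
    (haa' : a ≠ a') (hbb' : b ≠ b') (hab : a ≠ b) (hab' : a ≠ b') (ha'b : a' ≠ b)
    (ha'b' : a' ≠ b')
    (hA : Set.InjOn c {s(a, a'), s(a, b), s(a, b'), s(a', b), s(a', b')})
    (hB : Set.InjOn c {s(b, b'), s(a, b), s(a, b'), s(a', b), s(a', b')}) :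
    c s(a, a') = c s(b, b') := by
  by_contra hne
  have hS : #{a, a', b, b'} = 4 := by
    rw [card_insert_of_notMem (by simp [haa', hab, hab']),
      card_insert_of_notMem (by simp [ha'b, ha'b']), card_pair hbb']
  have hsix : Set.InjOn c {s(a, a'), s(b, b'), s(a, b), s(a, b'), s(a', b), s(a', b')} := by
    have hA' := ((Set.injOn_insert (by simp [hab, hab', ha'b, ha'b', haa'.symm])).1 hA).2
    rw [Set.injOn_insert (by simp [hab, hab', ha'b, ha'b', haa']), Set.image_insert_eq]
    exact ⟨hB, by simpa only [Set.mem_insert_iff, not_or] using ⟨hne, hA'⟩⟩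
  refine hrain.not_injOn hS (hsix.mono ?_)
  rintro e ⟨he, hdiag⟩
  induction e using Sym2.inductionOn with
  | hf x y =>
    simp only [mk_mem_sym2_iff, mem_insert, mem_singleton] at he
    simp only [Sym2.mk_isDiag_iff] at hdiag
    obtain ⟨hx | hx | hx | hx, hy | hy | hy | hy⟩ := he <;> subst hx hy <;>
      simp_all [Sym2.eq_swap]

section CrossColours

variable {A B : Finset (Fin n)}

theorem not_crosses_of_notMem_left {x y : Fin n} (hx : x ∉ A) (hy : y ∉ A) :
    ¬ Crosses A B s(x, y) := by
  rintro ⟨a, ha, b, -, h⟩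
  rcases Sym2.eq_iff.1 h with ⟨rfl, -⟩ | ⟨-, rfl⟩ <;> contradiction

theorem not_crosses_of_notMem_right {x y : Fin n} (hx : x ∉ B) (hy : y ∉ B) :
    ¬ Crosses A B s(x, y) := by
  rintro ⟨a, -, b, hb, h⟩
  rcases Sym2.eq_iff.1 h with ⟨-, rfl⟩ | ⟨rfl, -⟩ <;> contradiction

theorem exists_of_mem_crossOnlyColours {γ : ℕ} (hγ : γ ∈ crossOnlyColours n c A B) :
    ∃ p ∈ A ×ˢ B, c s(p.1, p.2) = γ := by
  classical
  simp only [crossOnlyColours, mem_sdiff, mem_image, mem_filter, mem_univ, true_and] at hγ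
  obtain ⟨⟨e, ⟨-, a, ha, b, hb, rfl⟩, rfl⟩, -⟩ := hγ
  exact ⟨(a, b), mem_product.2 ⟨ha, hb⟩, rfl⟩

theorem apply_notMem_crossOnlyColours {x y : Fin n} (hxy : x ≠ y) (hcr : ¬ Crosses A B s(x, y)) :
    c s(x, y) ∉ crossOnlyColours n c A B := by
  classical
  simp only [crossOnlyColours, mem_sdiff, mem_image, mem_filter, mem_univ, true_and, not_and,
    not_not]
  exact fun _ => ⟨s(x, y), ⟨by simpa using hxy, hcr⟩, rfl⟩

end CrossColours

section Representatives

variable {A B : Finset (Fin n)} {E : Finset (Fin n × Fin n)}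

theorem exists_injOn_image_eq_crossOnlyColours :
    ∃ E ⊆ A ×ˢ B, Set.InjOn (fun p : Fin n × Fin n => c s(p.1, p.2)) ↑E ∧
      E.image (fun p : Fin n × Fin n => c s(p.1, p.2)) = crossOnlyColours n c A B := by
  obtain ⟨E, hE, hinj, himg⟩ := exists_subset_injOn_image_eq_of_surjOn
    (f := fun p : Fin n × Fin n => c s(p.1, p.2)) ↑(A ×ˢ B) (crossOnlyColours n c A B)
    fun _ hγ => exists_of_mem_crossOnlyColours hγ
  exact ⟨E, coe_subset.1 hE, hinj, himg⟩

theorem apply_eq_of_square_mem (hrain : NoRainbowK4 n c) (hAB : Disjoint A B)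
    (hinj : Set.InjOn (fun p : Fin n × Fin n => c s(p.1, p.2)) ↑E)
    (hmaps : Set.MapsTo (fun p : Fin n × Fin n => c s(p.1, p.2)) ↑E (crossOnlyColours n c A B))
    {a a' b b' : Fin n} (ha : a ∈ A) (ha' : a' ∈ A) (hb : b ∈ B) (hb' : b' ∈ B)
    (haa' : a ≠ a') (hbb' : b ≠ b') (h₁ : (a, b) ∈ E) (h₂ : (a, b') ∈ E) (h₃ : (a', b) ∈ E)
    (h₄ : (a', b') ∈ E) :
    c s(a, a') = c s(b, b') := by
  have hsq : ({(a, b), (a, b'), (a', b), (a', b')} : Set _) ⊆ E := by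
    simp [Set.insert_subset_iff, h₁, h₂, h₃, h₄]
  have hinsert {x y : Fin n} (hxy : x ≠ y) (hcr : ¬ Crosses A B s(x, y)) :
      Set.InjOn c {s(x, y), s(a, b), s(a, b'), s(a', b), s(a', b')} := by
    simpa only [Set.image_insert_eq, Set.image_singleton] using
      (hinj.mono hsq).insert_image_of_notMem (hmaps.mono_left hsq)
        (apply_notMem_crossOnlyColours hxy hcr)
  have hne {x y : Fin n} (hx : x ∈ A) (hy : y ∈ B) : x ≠ y := fun h =>
    disjoint_left.1 hAB hx (h ▸ hy)
  exact hrain.apply_diagonals_eq haa' hbb' (hne ha hb) (hne ha hb') (hne ha' hb) (hne ha' hb')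
    (hinsert haa' (not_crosses_of_notMem_right (disjoint_left.1 hAB ha)
      (disjoint_left.1 hAB ha')))
    (hinsert hbb' (not_crosses_of_notMem_left (disjoint_right.1 hAB hb)
      (disjoint_right.1 hAB hb')))

theorem card_filter_mem_and_mem_lt (hmono : NoMonoClique n m c) (hrain : NoRainbowK4 n c)
    (hAB : Disjoint A B) (hinj : Set.InjOn (fun p : Fin n × Fin n => c s(p.1, p.2)) ↑E)
    (hmaps : Set.MapsTo (fun p : Fin n × Fin n => c s(p.1, p.2)) ↑E (crossOnlyColours n c A B))
    {b b' : Fin n} (hb : b ∈ B) (hb' : b' ∈ B) (hbb' : b ≠ b') :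
    #{a ∈ A | (a, b) ∈ E ∧ (a, b') ∈ E} < m := by
  by_contra! h
  obtain ⟨S, hS, hcard⟩ := exists_subset_card_eq h
  refine hmono ⟨S, hcard, c s(b, b'), fun x hx y hy hxy => ?_⟩
  obtain ⟨hxA, hxb, hxb'⟩ := mem_filter.1 (hS hx)
  obtain ⟨hyA, hyb, hyb'⟩ := mem_filter.1 (hS hy)
  exact apply_eq_of_square_mem hrain hAB hinj hmaps hxA hyA hb hb' hxy hbb' hxb hxb' hyb hyb'

end Representatives

end Colourings

theorem across_bound (n m k : ℕ) (hm : 3 ≤ m) (c : Sym2 (Fin n) → ℕ)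
    (hmono : NoMonoClique n m c) (hrain : NoRainbowK4 n c)
    (A B : Finset (Fin n)) (hAB : Disjoint A B)
    (hA : A.card ≤ k) (hB : B.card ≤ k) :
    ((crossOnlyColours n c A B).card : ℝ) ≤ (k : ℝ) ^ ((3 : ℝ) / 2) * Real.sqrt m := by
  classical
  obtain ⟨E, hE, hinj, himg⟩ := exists_injOn_image_eq_crossOnlyColours (c := c) (A := A) (B := B)
  have hmaps : Set.MapsTo (fun p : Fin n × Fin n => c s(p.1, p.2)) ↑E
      (crossOnlyColours n c A B) := fun p hp => himg ▸ mem_image_of_mem _ hp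
  have hcodeg : ∀ b ∈ B, ∀ b' ∈ B, b ≠ b' → #{a ∈ A | (a, b) ∈ E ∧ (a, b') ∈ E} ≤ m - 1 :=
    fun b hb b' hb' hbb' =>
      Nat.le_sub_one_of_lt (card_filter_mem_and_mem_lt hmono hrain hAB hinj hmaps hb hb' hbb')
  have hsq := sq_sum_card_bipartiteAbove_le (fun a b => (a, b) ∈ E) hcodeg
  rw [← card_eq_sum_card_bipartiteAbove_mem hE] at hsq
  have hEk : #E ≤ k ^ 2 :=
    calc #E ≤ #(A ×ˢ B) := card_le_card hE
      _ ≤ k ^ 2 := by rw [card_product, sq]; exact Nat.mul_le_mul hA hB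
  have hCE : #(crossOnlyColours n c A B) = #E := by rw [← himg, card_image_of_injOn hinj]
  have hm₁ : m - 1 + 1 = m := by omega
  refine Nat.cast_le_rpow_three_halves_mul_sqrt (hCE ▸ ?_)
  calc #E ^ 2 ≤ #A * (#E + (m - 1) * #B ^ 2) := hsq
    _ ≤ k * (k ^ 2 + (m - 1) * k ^ 2) := by gcongr
    _ = (m - 1 + 1) * k ^ 3 := by ring
    _ = m * k ^ 3 := by rw [hm₁]
end

section
/- Let c be an edge-colouring of K_n with no monochromatic K_m and no rainbow K_4, let A, B be disjoint vertex sets, and let H be a subgraph consisting of one edge between A and B for each colour used only between A and B. Then any two vertices x, y in B have at most m−1 common neighbours in H. -/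
section Crosses

variable {n : ℕ} {A B : Finset (Fin n)} {u v : Fin n}

theorem crosses_mk_iff : Crosses A B s(u, v) ↔ u ∈ A ∧ v ∈ B ∨ v ∈ A ∧ u ∈ B := by
  constructor
  · rintro ⟨a, ha, b, hb, h⟩
    rcases Sym2.eq_iff.1 h with ⟨rfl, rfl⟩ | ⟨rfl, rfl⟩
    exacts [Or.inl ⟨ha, hb⟩, Or.inr ⟨ha, hb⟩]
  · rintro (⟨hu, hv⟩ | ⟨hv, hu⟩)
    exacts [⟨u, hu, v, hv, rfl⟩, ⟨v, hv, u, hu, Sym2.eq_swap⟩]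

theorem not_crosses_of_mem_left (hAB : Disjoint A B) (hu : u ∈ A) (hv : v ∈ A) :
    ¬ Crosses A B s(u, v) := by
  rw [crosses_mk_iff]
  rintro (⟨-, hv'⟩ | ⟨-, hu'⟩)
  exacts [Finset.disjoint_left.1 hAB hv hv', Finset.disjoint_left.1 hAB hu hu']

theorem not_crosses_of_mem_right (hAB : Disjoint A B) (hu : u ∈ B) (hv : v ∈ B) :
    ¬ Crosses A B s(u, v) := by
  rw [crosses_mk_iff]
  rintro (⟨hu', -⟩ | ⟨hv', -⟩)
  exacts [Finset.disjoint_right.1 hAB hu hu', Finset.disjoint_right.1 hAB hv hv']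

theorem mem_left_of_adj_of_mem_right {H : SimpleGraph (Fin n)} [DecidableRel H.Adj]
    (hAB : Disjoint A B) (hHcross : ∀ e ∈ H.edgeFinset, Crosses A B e)
    (hu : u ∈ B) (huv : H.Adj u v) : v ∈ A := by
  have := hHcross s(u, v) (SimpleGraph.mem_edgeFinset.2 huv)
  rw [crosses_mk_iff] at this
  rcases this with ⟨hu', -⟩ | ⟨hv, -⟩
  exacts [absurd hu' (Finset.disjoint_right.1 hAB hu), hv]

end Crosses

theorem NoRainbowK4.exists_color_eq {n : ℕ} {c : Sym2 (Fin n) → ℕ} (hrain : NoRainbowK4 n c)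
    {S : Finset (Fin n)} (hS : S.card = 4) :
    ∃ p ∈ S, ∃ q ∈ S, ∃ r ∈ S, ∃ s ∈ S,
      p ≠ q ∧ r ≠ s ∧ s(p, q) ≠ s(r, s) ∧ c s(p, q) = c s(r, s) := by
  by_contra! h
  exact hrain ⟨S, hS, h⟩

theorem SimpleGraph.adj_or_eq_diagonal_of_mem_cycle {V : Type*} [DecidableEq V]
    (H : SimpleGraph V) {a b x y p q : V}
    (hax : H.Adj a x) (hay : H.Adj a y) (hbx : H.Adj b x) (hby : H.Adj b y)
    (hp : p ∈ ({a, b, x, y} : Finset V)) (hq : q ∈ ({a, b, x, y} : Finset V)) (hpq : p ≠ q) :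
    H.Adj p q ∨ s(p, q) = s(a, b) ∨ s(p, q) = s(x, y) := by
  simp only [Finset.mem_insert, Finset.mem_singleton] at hp hq
  rcases hp with rfl | rfl | rfl | rfl <;> rcases hq with rfl | rfl | rfl | rfl <;>
    simp_all [H.adj_comm, Sym2.eq_swap]

section Colouring

variable {n : ℕ} {c : Sym2 (Fin n) → ℕ} {A B : Finset (Fin n)}
  {H : SimpleGraph (Fin n)} [DecidableRel H.Adj]

theorem color_eq_of_adj_cycle (hrain : NoRainbowK4 n c) (hAB : Disjoint A B)
    (hHinj : ∀ e ∈ H.edgeFinset, ∀ f ∈ H.edgeFinset, c e = c f → e = f)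
    (hHonly : ∀ e ∈ H.edgeFinset, ∀ f : Sym2 (Fin n), ¬ f.IsDiag →
      c f = c e → Crosses A B f)
    {a b x y : Fin n} (ha : a ∈ A) (hb : b ∈ A) (hx : x ∈ B) (hy : y ∈ B)
    (hab : a ≠ b) (hxy : x ≠ y)
    (hax : H.Adj a x) (hay : H.Adj a y) (hbx : H.Adj b x) (hby : H.Adj b y) :
    c s(a, b) = c s(x, y) := by
  by_contra hne
  have hcard : ({a, b, x, y} : Finset (Fin n)).card = 4 := by
    have hA_ne : ∀ z ∈ A, z ≠ x ∧ z ≠ y := fun z hz =>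
      ⟨fun h => Finset.disjoint_left.1 hAB hz (h ▸ hx),
        fun h => Finset.disjoint_left.1 hAB hz (h ▸ hy)⟩
    exact Finset.card_eq_four.2 ⟨a, b, x, y, hab, (hA_ne a ha).1, (hA_ne a ha).2,
      (hA_ne b hb).1, (hA_ne b hb).2, hxy, rfl⟩
  have hab_ne : ∀ e ∈ H.edgeFinset, c s(a, b) ≠ c e := fun e he h =>
    not_crosses_of_mem_left hAB ha hb (hHonly e he _ (Sym2.mk_isDiag_iff.not.2 hab) h)
  have hxy_ne : ∀ e ∈ H.edgeFinset, c s(x, y) ≠ c e := fun e he h =>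
    not_crosses_of_mem_right hAB hx hy (hHonly e he _ (Sym2.mk_isDiag_iff.not.2 hxy) h)
  obtain ⟨p, hp, q, hq, r, hr, s, hs, hpq, hrs, hedge, hcol⟩ := hrain.exists_color_eq hcard
  have hcycle {u v : Fin n} := H.adj_or_eq_diagonal_of_mem_cycle (p := u) (q := v) hax hay hbx hby
  rcases hcycle hp hq hpq with hpq' | hpq' | hpq' <;>
    rcases hcycle hr hs hrs with hrs' | hrs' | hrs'
  · exact hedge (hHinj _ (H.mem_edgeFinset.2 hpq') _ (H.mem_edgeFinset.2 hrs') hcol)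
  · exact hab_ne _ (H.mem_edgeFinset.2 hpq') (hrs' ▸ hcol).symm
  · exact hxy_ne _ (H.mem_edgeFinset.2 hpq') (hrs' ▸ hcol).symm
  · exact hab_ne _ (H.mem_edgeFinset.2 hrs') (hpq' ▸ hcol)
  · exact hedge (hpq'.trans hrs'.symm)
  · exact hne (hpq' ▸ hrs' ▸ hcol)
  · exact hxy_ne _ (H.mem_edgeFinset.2 hrs') (hpq' ▸ hcol)
  · exact hne (hpq' ▸ hrs' ▸ hcol).symm
  · exact hedge (hpq'.trans hrs'.symm)

end Colouring

theorem common_neighbours_bound_general (n m : ℕ) (c : Sym2 (Fin n) → ℕ)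
    (hmono : NoMonoClique n m c) (hrain : NoRainbowK4 n c)
    (A B : Finset (Fin n)) (hAB : Disjoint A B)
    (H : SimpleGraph (Fin n)) [DecidableRel H.Adj]
    -- every edge of `H` joins `A` to `B`
    (hHcross : ∀ e ∈ H.edgeFinset, Crosses A B e)
    -- the edges of `H` have pairwise distinct colours (an SDR of the colours)
    (hHinj : ∀ e ∈ H.edgeFinset, ∀ f ∈ H.edgeFinset, c e = c f → e = f)
    -- each colour of an edge of `H` is used only on edges joining `A` to `B`
    (hHonly : ∀ e ∈ H.edgeFinset, ∀ f : Sym2 (Fin n), ¬ f.IsDiag →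
      c f = c e → Crosses A B f) :
    ∀ x ∈ B, ∀ y ∈ B, x ≠ y →
      (H.neighborFinset x ∩ H.neighborFinset y).card ≤ m - 1 := by
  intro x hx y hy hxy
  by_contra! hcard
  obtain ⟨S, hST, hS⟩ := Finset.exists_subset_card_eq
    (show m ≤ (H.neighborFinset x ∩ H.neighborFinset y).card by omega)
  refine hmono ⟨S, hS, c s(x, y), fun a ha b hb hab => ?_⟩
  have hadj {z : Fin n} (hz : z ∈ S) : H.Adj x z ∧ H.Adj y z := by
    simpa only [Finset.mem_inter, SimpleGraph.mem_neighborFinset] using hST hz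
  obtain ⟨hxa, hya⟩ := hadj ha
  obtain ⟨hxb, hyb⟩ := hadj hb
  exact color_eq_of_adj_cycle hrain hAB hHinj hHonly
    (mem_left_of_adj_of_mem_right hAB hHcross hx hxa)
    (mem_left_of_adj_of_mem_right hAB hHcross hx hxb) hx hy hab hxy
    hxa.symm hya.symm hxb.symm hyb.symm

theorem common_neighbours_bound (n m : ℕ) (hm : 3 ≤ m) (c : Sym2 (Fin n) → ℕ)
    (hmono : NoMonoClique n m c) (hrain : NoRainbowK4 n c)
    (A B : Finset (Fin n)) (hAB : Disjoint A B)
    (H : SimpleGraph (Fin n)) [DecidableRel H.Adj]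
    -- every edge of `H` joins `A` to `B`
    (hHcross : ∀ e ∈ H.edgeFinset, Crosses A B e)
    -- the edges of `H` have pairwise distinct colours (an SDR of the colours)
    (hHinj : ∀ e ∈ H.edgeFinset, ∀ f ∈ H.edgeFinset, c e = c f → e = f)
    -- each colour of an edge of `H` is used only on edges joining `A` to `B`
    (hHonly : ∀ e ∈ H.edgeFinset, ∀ f : Sym2 (Fin n), ¬ f.IsDiag →
      c f = c e → Crosses A B f) :
    ∀ x ∈ B, ∀ y ∈ B, x ≠ y →
      (H.neighborFinset x ∩ H.neighborFinset y).card ≤ m - 1 :=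
  common_neighbours_bound_general n m c hmono hrain A B hAB H hHcross hHinj hHonly
end

section
/- Let q be a prime power, α a primitive element of GF(q³) viewed as a 3-dimensional GF(q)-vector space. There is no 2-dimensional GF(q)-subspace P containing 1, α, α^j, and α^{j+1} for any 1 < j ≤ q²+q. -/
theorem no_plane_through_four_powers (q : ℕ)
    (hq : ∃ p n : ℕ, p.Prime ∧ 0 < n ∧ q = p ^ n)
    (F K : Type*) [Field F] [Field K] [Algebra F K] [Fintype F] [Fintype K]
    (hF : Fintype.card F = q) (hK : Fintype.card K = q ^ 3)
    (u : Kˣ) (hu : orderOf u = q ^ 3 - 1)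
    (j : ℕ) (hj1 : 1 < j) (hj2 : j ≤ q ^ 2 + q) :
    ¬ ∃ P : Submodule F K, Module.finrank F P = 2 ∧
        (1 : K) ∈ P ∧ (u : K) ∈ P ∧ (u : K) ^ j ∈ P ∧ (u : K) ^ (j + 1) ∈ P := by
  rintro ⟨P, hP2, h1P, hαP, hαjP, hαj1P⟩
  set α : K := (u : K) with hαdef
  obtain ⟨p, n, hp, hn, hqpn⟩ := hq
  have hq2 : 2 ≤ q := by
    subst hqpn
    calc 2 ≤ p := hp.two_le
    _ ≤ p ^ n := Nat.le_self_pow hn.ne' p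
  have hq3q : q < q ^ 3 := by nlinarith
  have hα0 : α ≠ 0 := Units.ne_zero u
  -- if a power of α lies in the image of F, its order facts give a contradiction
  have hpowF : ∀ (m : ℕ) (a : F), 0 < m → algebraMap F K a = α ^ m →
      q ^ 3 - 1 ≤ m * (q - 1) := by
    intro m a hm ha
    have hq' : α ^ (m * q) = α ^ m := by
      rw [pow_mul, ← ha, ← map_pow, ← hF, FiniteField.pow_card]
    have hsum : m * (q - 1) + m = m * q := by
      calc m * (q - 1) + m = m * ((q - 1) + 1) := by ring
      _ = m * q := by rw [Nat.sub_add_cancel (by omega)]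
    have hcancel : α ^ (m * (q - 1)) * α ^ m = 1 * α ^ m := by
      rw [one_mul, ← pow_add, hsum, hq']
    have h1 : α ^ (m * (q - 1)) = 1 := mul_right_cancel₀ (pow_ne_zero m hα0) hcancel
    have hu1 : u ^ (m * (q - 1)) = 1 := by
      ext
      push_cast
      exact h1
    have hdvd := orderOf_dvd_of_pow_eq_one hu1
    rw [hu] at hdvd
    exact Nat.le_of_dvd (Nat.mul_pos hm (by omega)) hdvd
  -- α is not an F-multiple of 1
  have hαnotF : ∀ a : F, ¬ a • (1 : K) = α := by
    intro a ha
    have : algebraMap F K a = α ^ 1 := by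
      rw [pow_one, ← ha, Algebra.algebraMap_eq_smul_one]
    have hle := hpowF 1 a one_pos this
    rw [one_mul] at hle
    omega
  -- finrank F K = 3
  have hrank : Module.finrank F K = 3 := by
    have hcard := Module.card_eq_pow_finrank (K := F) (V := K)
    rw [hF, hK] at hcard
    exact (Nat.pow_right_injective hq2 hcard.symm)
  -- the span of 1 and α
  set S : Submodule F K := Submodule.span F {(1 : K), α} with hSdef
  have h1S : (1 : K) ∈ S := Submodule.subset_span (Set.mem_insert _ _)
  have hαS : α ∈ S := Submodule.subset_span (Set.mem_insert_of_mem _ rfl)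
  have hind : LinearIndependent F ![(1 : K), α] :=
    (LinearIndependent.pair_iff' one_ne_zero).mpr hαnotF
  have hrange : Set.range ![(1 : K), α] = {(1 : K), α} := by
    simp [Matrix.range_cons, Matrix.range_empty]
    exact Set.pair_comm α 1
  have hSrank : Module.finrank F S = 2 := by
    have := finrank_span_eq_card hind
    rw [hrange] at this
    rw [hSdef, this, Fintype.card_fin]
  have hSP : S ≤ P := by
    rw [hSdef, Submodule.span_le]
    rintro x (rfl | rfl)
    · exact h1P
    · exact hαP
  have hPS : S = P := Submodule.eq_of_le_of_finrank_le hSP (by rw [hP2, hSrank])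
  rw [← hPS] at hαjP hαj1P
  obtain ⟨b, a, hab⟩ := Submodule.mem_span_pair.mp hαjP
  -- hab : b • 1 + a • α = α ^ j
  by_cases ha : a = 0
  · -- α ^ j is an F-multiple of 1
    have : algebraMap F K b = α ^ j := by
      rw [Algebra.algebraMap_eq_smul_one, ← hab, ha, zero_smul, add_zero]
    have hle := hpowF j b (by omega) this
    have h2 : j * (q - 1) ≤ (q ^ 2 + q) * (q - 1) :=
      Nat.mul_le_mul_right _ hj2
    have h3 : (q ^ 2 + q) * (q - 1) = q ^ 3 - q := by
      obtain ⟨m, rfl⟩ : ∃ m, q = m + 1 := ⟨q - 1, by omega⟩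
      simp only [Nat.add_sub_cancel]
      have : (m + 1) ^ 3 = ((m + 1) ^ 2 + (m + 1)) * m + (m + 1) := by ring
      omega
    omega
  · -- α ^ 2 ∈ S, hence all powers of α are in S, so S = ⊤, contradiction
    have he : α ^ (j + 1) = b • α + a • α ^ 2 := by
      rw [pow_succ, ← hab, add_mul, smul_mul_assoc, smul_mul_assoc, one_mul, ← sq]
    have haα2 : a • α ^ 2 ∈ S := by
      have := S.sub_mem hαj1P (S.smul_mem b hαS)
      rw [he] at this
      simpa using this
    have hα2 : α ^ 2 ∈ S := by
      have := S.smul_mem a⁻¹ haα2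
      rwa [smul_smul, inv_mul_cancel₀ ha, one_smul] at this
    have hpow : ∀ k : ℕ, α ^ k ∈ S := by
      intro k
      induction k with
      | zero => simpa using h1S
      | succ k ih =>
        obtain ⟨c, d, hcd⟩ := Submodule.mem_span_pair.mp ih
        rw [pow_succ, ← hcd, add_mul, smul_mul_assoc, smul_mul_assoc, one_mul, ← sq]
        exact S.add_mem (S.smul_mem c hαS) (S.smul_mem d hα2)
    have hcardU : Nat.card Kˣ = q ^ 3 - 1 := by
      rw [Nat.card_units, Nat.card_eq_fintype_card, hK]
    have hz : Subgroup.zpowers u = ⊤ :=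
      Subgroup.eq_top_of_card_eq _ (by rw [Nat.card_zpowers, hu, hcardU])
    have hStop : S = ⊤ := by
      rw [Submodule.eq_top_iff']
      intro x
      rcases eq_or_ne x 0 with rfl | hx
      · exact S.zero_mem
      · have hmem : Units.mk0 x hx ∈ Submonoid.powers u := by
          rw [mem_powers_iff_mem_zpowers, hz]
          trivial
        obtain ⟨k, hk⟩ := hmem
        have hk' : u ^ k = Units.mk0 x hx := hk
        have : x = α ^ k := by
          rw [hαdef, ← Units.val_pow_eq_pow_val, hk', Units.val_mk0]
        rw [this]
        exact hpow k
    rw [hStop, finrank_top, hrank] at hSrank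
    omega
end

section
/- For a prime power q, the incidence graph L_q of PG(2,q) has (q+1)(q²+q+1) edges, which is at least (n/2)^(3/2) where n = 2(q²+q+1) is its number of vertices; in particular |E(L_q)| = Ω(n^(3/2)). -/
open Module Submodule

section CountLines

variable (F V : Type*) [Field F] [Fintype F] [AddCommGroup V] [Module F V]
  [FiniteDimensional F V]

/-- nonzero vectors biject with pairs (1-dim subspace, nonzero vector in it). -/
noncomputable def nonzeroEquivSigma :
    {v : V // v ≠ 0} ≃ Σ P : {P : Submodule F V // finrank F P = 1}, {v : V // v ∈ P.1 ∧ v ≠ 0} := by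
  apply Equiv.symm
  apply Equiv.ofBijective (fun x => (⟨x.2.1, x.2.2.2⟩ : {v : V // v ≠ 0}))
  constructor
  · rintro ⟨⟨P, hP⟩, ⟨v, hvP, hv0⟩⟩ ⟨⟨Q, hQ⟩, ⟨w, hwQ, hw0⟩⟩ h
    simp only [Subtype.mk.injEq] at h
    subst h
    have hPs : P = Submodule.span F {v} := by
      refine (Submodule.eq_of_le_of_finrank_le ((Submodule.span_singleton_le_iff_mem v P).2 hvP) ?_).symm
      rw [hP, finrank_span_singleton hv0]
    have hQs : Q = Submodule.span F {v} := by
      refine (Submodule.eq_of_le_of_finrank_le ((Submodule.span_singleton_le_iff_mem v Q).2 hwQ) ?_).symm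
      rw [hQ, finrank_span_singleton hv0]
    have hPQ : P = Q := by rw [hPs, hQs]
    subst hPQ
    rfl
  · rintro ⟨v, hv⟩
    exact ⟨⟨⟨Submodule.span F {v}, finrank_span_singleton hv⟩, ⟨v, Submodule.mem_span_singleton_self v, hv⟩⟩, rfl⟩

lemma card_one_dim_mul :
    Nat.card {P : Submodule F V // finrank F P = 1} * (Fintype.card F - 1)
      = Fintype.card F ^ (finrank F V) - 1 := by
  classical
  haveI : Finite V := Module.finite_of_finite F
  haveI : Fintype V := Fintype.ofFinite V
  haveI fib : ∀ P : {P : Submodule F V // finrank F P = 1}, Fintype {v : V // v ∈ P.1 ∧ v ≠ 0} :=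
    fun _ => Fintype.ofFinite _
  haveI : Finite (Submodule F V) :=
    Finite.of_injective (fun P => (P : Set V)) SetLike.coe_injective
  haveI : Fintype {P : Submodule F V // finrank F P = 1} := Fintype.ofFinite _
  have h1 : Nat.card {v : V // v ≠ 0} = Fintype.card F ^ (finrank F V) - 1 := by
    rw [Nat.card_eq_fintype_card, ← card_eq_pow_finrank (K := F) (V := V)]
    simp [Fintype.card_subtype_compl]
  rw [← h1, Nat.card_congr (nonzeroEquivSigma F V)]
  simp only [Nat.card_eq_fintype_card]
  rw [Fintype.card_sigma]
  have hfib : ∀ P : {P : Submodule F V // finrank F P = 1},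
      Fintype.card {v : V // v ∈ P.1 ∧ v ≠ 0} = Fintype.card F - 1 := by
    intro P
    have e : {v : V // v ∈ P.1 ∧ v ≠ 0} ≃ {v : P.1 // v ≠ 0} :=
      { toFun := fun x => ⟨⟨x.1, x.2.1⟩, by simpa using x.2.2⟩
        invFun := fun x => ⟨x.1.1, x.1.2, by simpa [Submodule.mk_eq_zero] using x.2⟩
        left_inv := fun x => rfl
        right_inv := fun x => rfl }
    rw [Fintype.card_congr e]
    have hc : Fintype.card P.1 = Fintype.card F ^ finrank F P.1 := card_eq_pow_finrank
    have h2 : Fintype.card {v : P.1 // v ≠ 0} = Fintype.card P.1 - 1 := by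
      simp [Fintype.card_subtype_compl]
    rw [h2, hc, P.2, pow_one]
  simp [hfib, Finset.sum_const, Finset.card_univ, mul_comm]

end CountLines

section Quot
variable {F V : Type*} [Field F] [AddCommGroup V] [Module F V] [FiniteDimensional F V]

lemma finrank_map_mkQ (P L : Submodule F V) (h : P ≤ L) :
    finrank F (Submodule.map P.mkQ L) + finrank F P = finrank F L := by
  have h1 : Submodule.map P.mkQ L = LinearMap.range (P.mkQ ∘ₗ L.subtype) := by
    rw [LinearMap.range_comp, Submodule.range_subtype]
  have h2 : LinearMap.ker (P.mkQ ∘ₗ L.subtype) = Submodule.comap L.subtype P := by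
    rw [LinearMap.ker_comp, Submodule.ker_mkQ]
  have h3 := LinearMap.finrank_range_add_finrank_ker (P.mkQ ∘ₗ L.subtype)
  rw [h1, ← h3, h2, (Submodule.comapSubtypeEquivOfLe h).finrank_eq]

/-- Lines through a point correspond to points of the quotient. -/
noncomputable def linesThroughEquiv (P : Submodule F V) (hP : finrank F P = 1) :
    {L : Submodule F V // finrank F L = 2 ∧ P ≤ L} ≃
      {W : Submodule F (V ⧸ P) // finrank F W = 1} where
  toFun L := ⟨Submodule.map P.mkQ L.1, by
    have := finrank_map_mkQ P L.1 L.2.2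
    rw [hP, L.2.1] at this; omega⟩
  invFun W := ⟨Submodule.comap P.mkQ W.1, by
    have hle := Submodule.le_comap_mkQ P W.1
    have h1 : Submodule.map P.mkQ (Submodule.comap P.mkQ W.1) = W.1 :=
      Submodule.map_comap_eq_of_surjective (Submodule.mkQ_surjective P) W.1
    have := finrank_map_mkQ P (Submodule.comap P.mkQ W.1) hle
    rw [h1, W.2, hP] at this
    exact ⟨this.symm, hle⟩⟩
  left_inv L := by
    apply Subtype.ext
    show Submodule.comap P.mkQ (Submodule.map P.mkQ L.1) = L.1
    rw [Submodule.comap_map_mkQ, sup_eq_right.mpr L.2.2]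
  right_inv W := Subtype.ext (Submodule.map_comap_eq_of_surjective (Submodule.mkQ_surjective P) W.1)

end Quot

/-- The point–line incidence graph of the projective plane `PG(2,q)` built from a
3-dimensional vector space `K` over `F = GF(q)`. -/
def IncidenceGraph (F K : Type*) [Field F] [AddCommGroup K] [Module F K] :
    SimpleGraph ({P : Submodule F K // Module.finrank F P = 1} ⊕
      {L : Submodule F K // Module.finrank F L = 2}) :=
  SimpleGraph.fromRel (fun x y =>
    match x, y with
    | Sum.inl p, Sum.inr l => p.1 ≤ l.1
    | _, _ => False)

section Edges
variable (F K : Type*) [Field F] [AddCommGroup K] [Module F K]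

noncomputable def edgeEquivFlags :
    (IncidenceGraph F K).edgeSet ≃
      Σ P : {P : Submodule F K // Module.finrank F P = 1},
        {L : {L : Submodule F K // Module.finrank F L = 2} // P.1 ≤ L.1} := by
  apply Equiv.symm
  apply Equiv.ofBijective (fun x =>
    (⟨s(Sum.inl x.1, Sum.inr x.2.1), by
      rw [SimpleGraph.mem_edgeSet]
      refine ⟨by simp, Or.inl x.2.2⟩⟩ : (IncidenceGraph F K).edgeSet))
  constructor
  · rintro ⟨P, L, h⟩ ⟨P', L', h'⟩ hh
    simp only [Subtype.mk.injEq, Sym2.eq, Sym2.rel_iff', Prod.mk.injEq, Prod.swap_prod_mk,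
      Sum.inl.injEq, Sum.inr.injEq, reduceCtorEq, and_false, false_and, or_false] at hh
    obtain ⟨rfl, rfl⟩ := hh
    rfl
  · rintro ⟨e, he⟩
    induction e with
    | _ x y =>
      rw [SimpleGraph.mem_edgeSet, IncidenceGraph, SimpleGraph.fromRel_adj] at he
      obtain ⟨hne, h | h⟩ := he
      · match x, y, h with
        | Sum.inl P, Sum.inr L, h => exact ⟨⟨P, L, h⟩, rfl⟩
      · match x, y, h with
        | Sum.inr L, Sum.inl P, h => exact ⟨⟨P, L, h⟩, Subtype.ext (Sym2.eq_swap)⟩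

end Edges

theorem incidence_graph_edge_count (q : ℕ)
    (hq : ∃ p n : ℕ, p.Prime ∧ 0 < n ∧ q = p ^ n)
    (F K : Type*) [Field F] [Field K] [Algebra F K] [Fintype F]
    (hF : Fintype.card F = q) (hdim : Module.finrank F K = 3) :
    Nat.card (IncidenceGraph F K).edgeSet = (q + 1) * (q ^ 2 + q + 1) ∧
      (((2 * (q ^ 2 + q + 1) : ℕ) : ℝ) / 2) ^ ((3 : ℝ) / 2)
        ≤ (((q + 1) * (q ^ 2 + q + 1) : ℕ) : ℝ) := by
  classical
  have hq2 : 2 ≤ q := hF ▸ Fintype.one_lt_card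
  haveI : FiniteDimensional F K := FiniteDimensional.of_finrank_pos (by rw [hdim]; norm_num)
  haveI : Finite K := Module.finite_of_finite F
  haveI : Finite (Submodule F K) :=
    Finite.of_injective (fun P => (P : Set K)) SetLike.coe_injective
  haveI : Fintype {P : Submodule F K // finrank F P = 1} := Fintype.ofFinite _
  haveI fib : ∀ P : {P : Submodule F K // finrank F P = 1},
      Fintype {L : {L : Submodule F K // finrank F L = 2} // P.1 ≤ L.1} :=
    fun _ => Fintype.ofFinite _
  constructor
  · -- counting
    have hPoints : Nat.card {P : Submodule F K // finrank F P = 1} = q ^ 2 + q + 1 := by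
      have h := card_one_dim_mul F K
      rw [hF, hdim] at h
      have hfac : q ^ 3 - 1 = (q ^ 2 + q + 1) * (q - 1) := by
        obtain ⟨m, rfl⟩ : ∃ m, q = m + 1 := ⟨q - 1, by omega⟩
        have h3 : (m + 1) ^ 3 = ((m + 1) ^ 2 + (m + 1) + 1) * m + 1 := by ring
        rw [h3]
        simp
      exact Nat.eq_of_mul_eq_mul_right (by omega) (h.trans hfac)
    have hLines : ∀ P : {P : Submodule F K // finrank F P = 1},
        Nat.card {L : {L : Submodule F K // finrank F L = 2} // P.1 ≤ L.1} = q + 1 := by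
      intro P
      have hqdim : finrank F (K ⧸ P.1) = 2 := by
        have h := Submodule.finrank_quotient_add_finrank P.1
        rw [hdim, P.2] at h; omega
      have h := card_one_dim_mul F (K ⧸ P.1)
      rw [hF, hqdim] at h
      have e1 : {L : {L : Submodule F K // finrank F L = 2} // P.1 ≤ L.1} ≃
          {L : Submodule F K // finrank F L = 2 ∧ P.1 ≤ L} :=
        Equiv.subtypeSubtypeEquivSubtypeInter _ _
      rw [Nat.card_congr (e1.trans (linesThroughEquiv P.1 P.2))]
      have hfac : q ^ 2 - 1 = (q + 1) * (q - 1) := by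
        obtain ⟨m, rfl⟩ : ∃ m, q = m + 1 := ⟨q - 1, by omega⟩
        have h3 : (m + 1) ^ 2 = ((m + 1) + 1) * m + 1 := by ring
        rw [h3]
        simp
      exact Nat.eq_of_mul_eq_mul_right (by omega) (h.trans hfac)
    rw [Nat.card_congr (edgeEquivFlags F K)]
    simp only [Nat.card_eq_fintype_card]
    rw [Fintype.card_sigma]
    have : ∀ P : {P : Submodule F K // finrank F P = 1},
        Fintype.card {L : {L : Submodule F K // finrank F L = 2} // P.1 ≤ L.1} = q + 1 :=
      fun P => (Nat.card_eq_fintype_card.symm).trans (hLines P)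
    simp only [this, Finset.sum_const, Finset.card_univ, smul_eq_mul]
    rw [← Nat.card_eq_fintype_card, hPoints, mul_comm]
  · -- inequality
    push_cast
    have hq0 : (0 : ℝ) ≤ (q : ℝ) := Nat.cast_nonneg q
    set a : ℝ := (q : ℝ) ^ 2 + (q : ℝ) + 1 with ha
    have ha0 : (0 : ℝ) < a := by positivity
    have h1 : 2 * a / 2 = a := by ring
    rw [h1]
    have h2 : a ^ ((3 : ℝ) / 2) = a * Real.sqrt a := by
      rw [show ((3 : ℝ) / 2) = 1 + 1 / 2 by norm_num, Real.rpow_add ha0, Real.rpow_one,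
        ← Real.sqrt_eq_rpow]
    have h3 : Real.sqrt a ≤ (q : ℝ) + 1 := by
      rw [show ((q : ℝ) + 1) = Real.sqrt (((q : ℝ) + 1) ^ 2) from (Real.sqrt_sq (by positivity)).symm]
      exact Real.sqrt_le_sqrt (by nlinarith)
    rw [h2]
    calc a * Real.sqrt a ≤ a * ((q : ℝ) + 1) := mul_le_mul_of_nonneg_left h3 ha0.le
      _ = ((q : ℝ) + 1) * a := by ring
end
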